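/- Along any trajectory z^(t) = V(z^(t−1)) with initial point z^(0) = (x^(0), y^(0)), the sequences X(x^(t)) and Y(y^(t)) both converge to 0 if |X(x^(0))·Y(y^(0))| < 1, both converge to 1 if |X(x^(0))·Y(y^(0))| = 1, and both tend to +∞ if |X(x^(0))·Y(y^(0))| > 1. Consequently every limit point of the trajectory lies in H_0 in the first case and in H_1 in the second case. -/

import Mathlib

/-!
Summing the defining equations of `V` and using that the inheritance coefficients are row
stochastic gives `X' = Y' = X Y`. Hence the product `X Y` is squared at every step, so
`X(x⁽ᵗ⁺¹⁾) = Y(y⁽ᵗ⁺¹⁾) = c ^ 2 ^ t` with `c = X(x⁽⁰⁾) Y(y⁽⁰⁾)`, and the three regimes are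
those of `c ^ 2 ^ t`. Limit points are then constrained by continuity of `X` and `Y`.
-/

open Finset

/-- The evolution operator `V` of a bisexual population:
`x'_j = Σ_{i,k} P^f_{ik,j} x_i y_k`, `y'_l = Σ_{i,k} P^m_{ik,l} x_i y_k`. -/
noncomputable def Vmap {n ν : ℕ} (Pf : Fin n → Fin ν → Fin n → ℝ)
    (Pm : Fin n → Fin ν → Fin ν → ℝ)
    (z : (Fin n → ℝ) × (Fin ν → ℝ)) : (Fin n → ℝ) × (Fin ν → ℝ) :=
  (fun j => ∑ i, ∑ k, Pf i k j * z.1 i * z.2 k,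
   fun l => ∑ i, ∑ k, Pm i k l * z.1 i * z.2 k)

open Filter Topology

theorem sum_sum_sum_mul_mul_of_sum_eq_one {ι κ μ R : Type*} [Fintype ι] [Fintype κ] [Fintype μ]
    [CommSemiring R] (P : ι → κ → μ → R) (hP : ∀ i k, ∑ j, P i k j = 1) (x : ι → R)
    (y : κ → R) :
    ∑ j, ∑ i, ∑ k, P i k j * x i * y k = (∑ i, x i) * ∑ k, y k := by
  rw [sum_comm, sum_mul_sum]
  refine sum_congr rfl fun i _ => ?_
  rw [sum_comm]
  refine sum_congr rfl fun k _ => ?_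
  rw [← sum_mul, ← sum_mul, hP, one_mul]

theorem eq_pow_two_pow_of_succ_eq_sq {M : Type*} [Monoid M] {u : ℕ → M}
    (hu : ∀ t, u (t + 1) = u t ^ 2) (t : ℕ) : u t = u 0 ^ 2 ^ t := by
  induction t with
  | zero => rw [pow_zero, pow_one]
  | succ t ih => rw [hu, ih, ← pow_mul, pow_succ]

section Vmap

variable {n ν : ℕ} (Pf : Fin n → Fin ν → Fin n → ℝ) (Pm : Fin n → Fin ν → Fin ν → ℝ)

theorem sum_Vmap_fst (hPf1 : ∀ i k, ∑ j, Pf i k j = 1) (z : (Fin n → ℝ) × (Fin ν → ℝ)) :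
    ∑ j, (Vmap Pf Pm z).1 j = (∑ i, z.1 i) * ∑ k, z.2 k :=
  sum_sum_sum_mul_mul_of_sum_eq_one Pf hPf1 z.1 z.2

theorem sum_Vmap_snd (hPm1 : ∀ i k, ∑ l, Pm i k l = 1) (z : (Fin n → ℝ) × (Fin ν → ℝ)) :
    ∑ l, (Vmap Pf Pm z).2 l = (∑ i, z.1 i) * ∑ k, z.2 k :=
  sum_sum_sum_mul_mul_of_sum_eq_one Pm hPm1 z.1 z.2

theorem sums_trajectory_succ (hPf1 : ∀ i k, ∑ j, Pf i k j = 1)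
    (hPm1 : ∀ i k, ∑ l, Pm i k l = 1) (z : ℕ → (Fin n → ℝ) × (Fin ν → ℝ))
    (hz : ∀ t, z (t + 1) = Vmap Pf Pm (z t)) (t : ℕ) :
    ∑ i, (z (t + 1)).1 i = ((∑ i, (z 0).1 i) * ∑ k, (z 0).2 k) ^ 2 ^ t ∧
      ∑ k, (z (t + 1)).2 k = ((∑ i, (z 0).1 i) * ∑ k, (z 0).2 k) ^ 2 ^ t := by
  have hX (t : ℕ) : ∑ i, (z (t + 1)).1 i = (∑ i, (z t).1 i) * ∑ k, (z t).2 k := by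
    rw [hz, sum_Vmap_fst Pf Pm hPf1]
  have hY (t : ℕ) : ∑ k, (z (t + 1)).2 k = (∑ i, (z t).1 i) * ∑ k, (z t).2 k := by
    rw [hz, sum_Vmap_snd Pf Pm hPm1]
  have hXY := eq_pow_two_pow_of_succ_eq_sq (u := fun t => (∑ i, (z t).1 i) * ∑ k, (z t).2 k)
    (fun t => by simp only [hX, hY, sq]) t
  exact ⟨(hX t).trans hXY, (hY t).trans hXY⟩

end Vmap

theorem tendsto_pow_two_pow_of_abs_lt_one {c : ℝ} (h : |c| < 1) :
    Tendsto (fun t : ℕ => c ^ 2 ^ t) atTop (𝓝 0) :=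
  (tendsto_pow_atTop_nhds_zero_of_abs_lt_one h).comp
    (tendsto_pow_atTop_atTop_of_one_lt one_lt_two)

theorem abs_pow_two_pow_of_ne_zero {R : Type*} [Ring R] [LinearOrder R] [IsOrderedRing R] (c : R)
    {t : ℕ} (ht : t ≠ 0) : |c| ^ 2 ^ t = c ^ 2 ^ t :=
  (Nat.even_pow' ht).2 even_two |>.pow_abs c

theorem tendsto_pow_two_pow_of_abs_eq_one {c : ℝ} (h : |c| = 1) :
    Tendsto (fun t : ℕ => c ^ 2 ^ t) atTop (𝓝 1) :=
  tendsto_const_nhds.congr' <| (eventually_ne_atTop 0).mono fun t ht => by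
    dsimp only
    rw [← abs_pow_two_pow_of_ne_zero c ht, h, one_pow]

theorem tendsto_pow_two_pow_of_one_lt_abs {c : ℝ} (h : 1 < |c|) :
    Tendsto (fun t : ℕ => c ^ 2 ^ t) atTop atTop :=
  ((tendsto_pow_atTop_atTop_of_one_lt h).comp
      (tendsto_pow_atTop_atTop_of_one_lt one_lt_two)).congr' <|
    (eventually_ne_atTop 0).mono fun _ ht => abs_pow_two_pow_of_ne_zero c ht

theorem MapClusterPt.eq_of_tendsto_comp {α X Y : Type*} [TopologicalSpace X]
    [TopologicalSpace Y] [T2Space Y] {F : Filter α} {u : α → X} {x : X} {f : X → Y} {y : Y}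
    (hx : MapClusterPt x F u) (hf : ContinuousAt f x) (hu : Tendsto (fun a => f (u a)) F (𝓝 y)) :
    f x = y :=
  eq_of_nhds_neBot ((hx.continuousAt_comp hf).neBot.mono (inf_le_inf_left _ hu))

theorem eabp_omega_limit_general {n ν : ℕ}
    (Pf : Fin n → Fin ν → Fin n → ℝ) (Pm : Fin n → Fin ν → Fin ν → ℝ)
    (hPf1 : ∀ i k, ∑ j, Pf i k j = 1)
    (hPm1 : ∀ i k, ∑ l, Pm i k l = 1)
    (z : ℕ → (Fin n → ℝ) × (Fin ν → ℝ))
    (hz : ∀ t, z (t + 1) = Vmap Pf Pm (z t))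
    (c : ℝ) (hc : c = (∑ i, (z 0).1 i) * (∑ k, (z 0).2 k)) :
    (|c| < 1 →
      Tendsto (fun t => ∑ i, (z t).1 i) atTop (𝓝 0) ∧
      Tendsto (fun t => ∑ k, (z t).2 k) atTop (𝓝 0) ∧
      ∀ w : (Fin n → ℝ) × (Fin ν → ℝ), MapClusterPt w atTop z →
        (∑ i, w.1 i = 0 ∧ ∑ k, w.2 k = 0)) ∧
    (|c| = 1 →
      Tendsto (fun t => ∑ i, (z t).1 i) atTop (𝓝 1) ∧
      Tendsto (fun t => ∑ k, (z t).2 k) atTop (𝓝 1) ∧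
      ∀ w : (Fin n → ℝ) × (Fin ν → ℝ), MapClusterPt w atTop z →
        (∑ i, w.1 i = 1 ∧ ∑ k, w.2 k = 1)) ∧
    (1 < |c| →
      Tendsto (fun t => ∑ i, (z t).1 i) atTop atTop ∧
      Tendsto (fun t => ∑ k, (z t).2 k) atTop atTop) := by
  set X : ℕ → ℝ := fun t => ∑ i, (z t).1 i
  set Y : ℕ → ℝ := fun t => ∑ k, (z t).2 k
  have hXY := sums_trajectory_succ Pf Pm hPf1 hPm1 z hz
  rw [← hc] at hXY
  have limits {l : Filter ℝ} (h : Tendsto (fun t : ℕ => c ^ 2 ^ t) atTop l) :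
      Tendsto X atTop l ∧ Tendsto Y atTop l :=
    ⟨(tendsto_add_atTop_iff_nat 1).1 (h.congr fun t => (hXY t).1.symm),
      (tendsto_add_atTop_iff_nat 1).1 (h.congr fun t => (hXY t).2.symm)⟩
  have clusterPts {L : ℝ} (hXL : Tendsto X atTop (𝓝 L)) (hYL : Tendsto Y atTop (𝓝 L))
      (w : (Fin n → ℝ) × (Fin ν → ℝ)) (hw : MapClusterPt w atTop z) :
      ∑ i, w.1 i = L ∧ ∑ k, w.2 k = L :=
    ⟨hw.eq_of_tendsto_comp (f := fun p : (Fin n → ℝ) × (Fin ν → ℝ) => ∑ i, p.1 i)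
        (by fun_prop) hXL,
      hw.eq_of_tendsto_comp (f := fun p : (Fin n → ℝ) × (Fin ν → ℝ) => ∑ k, p.2 k)
        (by fun_prop) hYL⟩
  refine ⟨fun h => ?_, fun h => ?_, fun h => limits (tendsto_pow_two_pow_of_one_lt_abs h)⟩
  · obtain ⟨hXL, hYL⟩ := limits (tendsto_pow_two_pow_of_abs_lt_one h)
    exact ⟨hXL, hYL, clusterPts hXL hYL⟩
  · obtain ⟨hXL, hYL⟩ := limits (tendsto_pow_two_pow_of_abs_eq_one h)
    exact ⟨hXL, hYL, clusterPts hXL hYL⟩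

/-- Along any trajectory of the evolution operator, the coordinate sums `X(x⁽ᵗ⁾)`, `Y(y⁽ᵗ⁾)`
converge to `0` if `|X(x⁽⁰⁾)Y(y⁽⁰⁾)| < 1`, to `1` if `|X(x⁽⁰⁾)Y(y⁽⁰⁾)| = 1`, and tend to
`+∞` if `|X(x⁽⁰⁾)Y(y⁽⁰⁾)| > 1`; consequently every limit point of the trajectory lies in
`H₀` in the first case and in `H₁` in the second case. -/
theorem eabp_omega_limit {n ν : ℕ} [NeZero n] [NeZero ν]
    (Pf : Fin n → Fin ν → Fin n → ℝ) (Pm : Fin n → Fin ν → Fin ν → ℝ)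
    (hPf0 : ∀ i k j, 0 ≤ Pf i k j) (hPf1 : ∀ i k, ∑ j, Pf i k j = 1)
    (hPm0 : ∀ i k l, 0 ≤ Pm i k l) (hPm1 : ∀ i k, ∑ l, Pm i k l = 1)
    (z : ℕ → (Fin n → ℝ) × (Fin ν → ℝ))
    (hz : ∀ t, z (t + 1) = Vmap Pf Pm (z t))
    (c : ℝ) (hc : c = (∑ i, (z 0).1 i) * (∑ k, (z 0).2 k)) :
    (|c| < 1 →
      Tendsto (fun t => ∑ i, (z t).1 i) atTop (𝓝 0) ∧
      Tendsto (fun t => ∑ k, (z t).2 k) atTop (𝓝 0) ∧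
      ∀ w : (Fin n → ℝ) × (Fin ν → ℝ), MapClusterPt w atTop z →
        (∑ i, w.1 i = 0 ∧ ∑ k, w.2 k = 0)) ∧
    (|c| = 1 →
      Tendsto (fun t => ∑ i, (z t).1 i) atTop (𝓝 1) ∧
      Tendsto (fun t => ∑ k, (z t).2 k) atTop (𝓝 1) ∧
      ∀ w : (Fin n → ℝ) × (Fin ν → ℝ), MapClusterPt w atTop z →
        (∑ i, w.1 i = 1 ∧ ∑ k, w.2 k = 1)) ∧
    (1 < |c| →
      Tendsto (fun t => ∑ i, (z t).1 i) atTop atTop ∧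
      Tendsto (fun t => ∑ k, (z t).2 k) atTop atTop) :=
  eabp_omega_limit_general Pf Pm hPf1 hPm1 z hz c hc
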